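/- arXiv:2401.08388 — 2 statements merged into one kernel-verified Lean document; each statement's English description precedes it below -/
import Mathlib

section
/- Define tbi(c) = Σ_b b·e(c,b) (sum over 2 ≤ b ≤ ⌈(c+1)/2⌉). For c ≥ 6, tbi(c) = 3·tbi(c−2) + 2·tbi(c−3) + 2^{c−3}. -/
open Classical

/-- The number of sign changes in a finite sequence of integers. -/
def signChanges (l : List ℤ) : ℕ :=
  ((l.zip l.tail).filter (fun p => p.1 * p.2 < 0)).length

/-- The sum of the absolute values of the entries. -/
def absSum (l : List ℤ) : ℕ := (l.map Int.natAbs).sum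

/-- An even continued fraction representation: a nonempty even-length
sequence of nonzero integers. -/
def IsECF (l : List ℤ) : Prop :=
  l ≠ [] ∧ Even l.length ∧ ∀ x ∈ l, x ≠ 0

/-- Palindromic or anti-palindromic sequences. -/
def IsPalOrAnti (l : List ℤ) : Prop :=
  l.reverse = l ∨ l.reverse = l.map (fun x => -x)

/-- The set `E(c)` of even continued fractions with crossing number `c`. -/
def Ecross (c : ℕ) : Set (List ℤ) :=
  {l | IsECF l ∧ (2 * absSum l : ℤ) - signChanges l = c}

/-- The set `E(c,b)` of even continued fractions with crossing number `c`
and braid index `b`. -/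
def Eset (c b : ℕ) : Set (List ℤ) :=
  {l | IsECF l ∧ (2 * absSum l : ℤ) - signChanges l = c ∧
    (absSum l : ℤ) - signChanges l + 1 = b}

noncomputable def e (c b : ℕ) : ℕ := (Eset c b).ncard

noncomputable def eTot (c : ℕ) : ℕ := (Ecross c).ncard

noncomputable def ep (c b : ℕ) : ℕ := (Eset c b ∩ {l | IsPalOrAnti l}).ncard

noncomputable def epTot (c : ℕ) : ℕ := (Ecross c ∩ {l | IsPalOrAnti l}).ncard

/-- The total braid index: the sum of `b * e(c,b)` over all braid indices `b`. -/
noncomputable def tbi (c : ℕ) : ℕ := ∑ b ∈ Finset.Icc 2 ((c + 2) / 2), b * e c b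

/-!
Weight each zero-free sequence by its braid index `b = S - L + 1`, where `S = Σ|aᵢ|` and `L` is
the number of sign changes; then `tbi c` is the total weight of the even-length sequences of
crossing number `c = 2S - L`. Taking one unit off the first entry (lowering `|a₁| ≥ 2` by one,
or deleting `a₁ = ±1`) is a bijection from the sequences of crossing number `c + 3` onto those
of crossing numbers `c + 1` (same parity), `c + 1` and `c + 2` (opposite parity), according as
`|a₁| ≥ 2`, or `a₁ = ±1` has the sign of `a₂` or not; it lowers `b` by `1`, `1`, `0`. This
gives linear recursions for the counts and weights of each parity. In total there are
`2 ^ (c + 1)` sequences of crossing number `c + 1` or `c + 2`, and eliminating the odd-length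
weights gives the recursion for `tbi`.
-/

namespace Int

theorem sign_add_sign (a : ℤ) : (a + a.sign).sign = a.sign := by
  rcases lt_trichotomy a 0 with h | rfl | h
  · rw [sign_eq_neg_one_of_neg h, sign_eq_neg_one_of_neg (by omega)]
  · rfl
  · rw [sign_eq_one_of_pos h, sign_eq_one_of_pos (by omega)]

theorem natAbs_add_sign {a : ℤ} (ha : a ≠ 0) : (a + a.sign).natAbs = a.natAbs + 1 := by
  rcases lt_trichotomy a 0 with h | rfl | h
  · rw [sign_eq_neg_one_of_neg h]; omega
  · exact absurd rfl ha
  · rw [sign_eq_one_of_pos h]; omega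

theorem add_sign_injective : Function.Injective fun a : ℤ => a + a.sign := by
  intro a b h
  rcases lt_trichotomy a 0 with ha | rfl | ha <;> rcases lt_trichotomy b 0 with hb | rfl | hb <;>
    simp only [sign_eq_neg_one_of_neg, sign_eq_one_of_pos, sign_zero, *] at h <;> omega

theorem add_sign_eq_zero_iff {a : ℤ} : a + a.sign = 0 ↔ a = 0 :=
  add_sign_injective.eq_iff' rfl

theorem sub_sign_add_sign {a : ℤ} (ha : 2 ≤ a.natAbs) : a - a.sign + (a - a.sign).sign = a := by
  rcases lt_trichotomy a 0 with h | rfl | h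
  · rw [sign_eq_neg_one_of_neg h, sign_eq_neg_one_of_neg (by omega)]; omega
  · simp at ha
  · rw [sign_eq_one_of_pos h, sign_eq_one_of_pos (by omega)]; omega

end Int

theorem headI_ne_zero_of_ne_nil {m : List ℤ} (hne : m ≠ []) (h0 : 0 ∉ m) : m.headI ≠ 0 := by
  rcases m with _ | ⟨a, t⟩
  · exact absurd rfl hne
  · exact fun ha => h0 (ha ▸ List.mem_cons_self)

section SignChanges

variable {l m : List ℤ} {p q : Bool} {c d : ℕ}

theorem absSum_cons (a : ℤ) (t : List ℤ) : absSum (a :: t) = a.natAbs + absSum t := by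
  simp [absSum]

theorem signChanges_cons_cons (a b : ℤ) (t : List ℤ) :
    signChanges (a :: b :: t) = signChanges (b :: t) + if a * b < 0 then 1 else 0 := by
  simp only [signChanges, List.tail_cons, List.zip_cons_cons, List.filter_cons]
  split_ifs <;> simp_all

theorem signChanges_cons_of_sign_eq {a a' : ℤ} (h : a.sign = a'.sign) (t : List ℤ) :
    signChanges (a :: t) = signChanges (a' :: t) := by
  rcases t with _ | ⟨b, t⟩
  · rfl
  · have : a * b < 0 ↔ a' * b < 0 := by
      simp only [← Int.sign_eq_neg_one_iff_neg, Int.sign_mul, h]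
    simp only [signChanges_cons_cons, this]

theorem signChanges_le_absSum (l : List ℤ) : signChanges l ≤ absSum l := by
  induction l with
  | nil => exact le_rfl
  | cons a t ih =>
    rcases t with _ | ⟨b, t⟩
    · exact Nat.zero_le _
    · have : a * b < 0 → a ≠ 0 := by rintro h rfl; simp at h
      rw [signChanges_cons_cons, absSum_cons]
      split_ifs with h <;> grind

theorem signChanges_lt_length (hl : l ≠ []) : signChanges l < l.length := by
  have hle := List.length_filter_le (fun p : ℤ × ℤ => decide (p.1 * p.2 < 0)) (l.zip l.tail)
  simp only [List.length_zip, List.length_tail] at hle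
  have := List.length_pos_of_ne_nil hl
  unfold signChanges
  omega

theorem length_le_absSum (hl : 0 ∉ l) : l.length ≤ absSum l := by
  simpa [absSum] using List.length_le_sum_of_one_le (l.map Int.natAbs) (by
    simp only [List.mem_map]
    rintro _ ⟨x, hx, rfl⟩
    exact Int.natAbs_pos.2 (ne_of_mem_of_not_mem hx hl))

-- Truncated subtraction is harmless here, by `signChanges_le_absSum`.
def crossingNumber (l : List ℤ) : ℕ := 2 * absSum l - signChanges l

def braidIndex (l : List ℤ) : ℕ := absSum l + 1 - signChanges l

theorem crossingNumber_singleton (a : ℤ) : crossingNumber [a] = 2 * a.natAbs := by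
  simp [crossingNumber, absSum, signChanges]

def crossingSeqs (p : Bool) (c : ℕ) : Set (List ℤ) :=
  {l | l ≠ [] ∧ 0 ∉ l ∧ l.length.bodd = p ∧ crossingNumber l = c}

theorem headI_ne_zero_of_mem_crossingSeqs (hm : m ∈ crossingSeqs p c) : m.headI ≠ 0 :=
  headI_ne_zero_of_ne_nil hm.1 hm.2.1

theorem crossingSeqs_finite (p : Bool) (c : ℕ) : (crossingSeqs p c).Finite := by
  let I := Set.Icc (-(c : ℤ)) c
  refine ((List.finite_length_le I c).image (List.map Subtype.val)).subset ?_
  rintro l ⟨-, h0, -, hc⟩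
  have hS : absSum l ≤ c := by
    have := signChanges_le_absSum l
    unfold crossingNumber at hc
    omega
  have hI : ∀ x ∈ l, x ∈ I := fun x hx => by
    have : x.natAbs ≤ absSum l := List.le_sum_of_mem (List.mem_map_of_mem hx)
    simp only [I, Set.mem_Icc]
    omega
  lift l to List I using hI
  exact ⟨l, by simpa using (length_le_absSum h0).trans hS, rfl⟩

theorem mem_crossingSeqs_congr (h0 : l ≠ [] ∧ 0 ∉ l ↔ m ≠ [] ∧ 0 ∉ m)
    (hp : l.length.bodd = p ↔ m.length.bodd = q)
    (hc : m.headI ≠ 0 → (crossingNumber l = c ↔ crossingNumber m = d)) :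
    l ∈ crossingSeqs p c ↔ m ∈ crossingSeqs q d := by
  simp only [crossingSeqs, Set.mem_ofPred_eq]
  rw [← and_assoc, ← and_assoc (a := m ≠ []), h0]
  exact and_congr_right fun hm => and_congr hp (hc (headI_ne_zero_of_ne_nil hm.1 hm.2))

theorem eq_singleton_of_mem_crossingSeqs_of_le_two (hl : l ∈ crossingSeqs p c) (hc : c ≤ 2) :
    c = 2 ∧ p = true ∧ (l = [1] ∨ l = [-1]) := by
  obtain ⟨hne, h0, rfl, rfl⟩ := hl
  obtain ⟨a, t, rfl⟩ := List.exists_cons_of_ne_nil hne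
  rcases t with _ | ⟨b, t⟩
  · have ha : a.natAbs ≠ 0 := Int.natAbs_ne_zero.2 fun ha => h0 (by simp [ha])
    rw [crossingNumber_singleton] at hc ⊢
    rcases Int.natAbs_eq_iff.1 (show a.natAbs = 1 by omega) with rfl | rfl <;> simp
  · have hL := signChanges_lt_length hne
    have hS := length_le_absSum h0
    simp only [crossingNumber, List.length_cons] at hc hL hS
    omega

theorem braidIndex_mem_Icc (hl : l ∈ crossingSeqs p c) :
    braidIndex l ∈ Finset.Icc 2 ((c + 2) / 2) := by
  obtain ⟨hne, h0, -, rfl⟩ := hl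
  have hL := signChanges_lt_length hne
  have hS := length_le_absSum h0
  simp only [Finset.mem_Icc, braidIndex, crossingNumber]
  omega

end SignChanges

section Peeling

variable {m : List ℤ} {p : Bool} {c : ℕ}

def growHead : List ℤ → List ℤ
  | [] => []
  | a :: t => (a + a.sign) :: t

def consSign (m : List ℤ) : List ℤ := m.headI.sign :: m

def consNegSign (m : List ℤ) : List ℤ := -m.headI.sign :: m

theorem growHead_injective : Function.Injective growHead := by
  rintro (_ | ⟨a, t⟩) (_ | ⟨b, s⟩) h <;>
    simp only [growHead, List.cons.injEq, reduceCtorEq] at h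
  · rfl
  · rw [Int.add_sign_injective h.1, h.2]

theorem consSign_injective : Function.Injective consSign := fun _ _ h => (List.cons.inj h).2

theorem consNegSign_injective : Function.Injective consNegSign := fun _ _ h => (List.cons.inj h).2

theorem length_growHead (m : List ℤ) : (growHead m).length = m.length := by
  rcases m with _ | ⟨a, t⟩ <;> rfl

theorem zero_mem_growHead (m : List ℤ) : 0 ∈ growHead m ↔ 0 ∈ m := by
  rcases m with _ | ⟨a, t⟩
  · rfl
  · simp only [growHead, List.mem_cons, eq_comm (a := (0 : ℤ)), Int.add_sign_eq_zero_iff]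

theorem absSum_growHead (hm : m.headI ≠ 0) : absSum (growHead m) = absSum m + 1 := by
  rcases m with _ | ⟨a, t⟩
  · exact absurd rfl hm
  · rw [growHead, absSum_cons, absSum_cons, Int.natAbs_add_sign (a := a) hm]
    ring

theorem absSum_consSign (hm : m.headI ≠ 0) : absSum (consSign m) = absSum m + 1 := by
  rw [consSign, absSum_cons, Int.natAbs_sign_of_ne_zero hm, add_comm]

theorem absSum_consNegSign (hm : m.headI ≠ 0) : absSum (consNegSign m) = absSum m + 1 := by
  rw [consNegSign, absSum_cons, Int.natAbs_neg, Int.natAbs_sign_of_ne_zero hm, add_comm]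

theorem signChanges_growHead (m : List ℤ) : signChanges (growHead m) = signChanges m := by
  rcases m with _ | ⟨a, t⟩
  · rfl
  · exact signChanges_cons_of_sign_eq (Int.sign_add_sign a) t

theorem signChanges_consSign (hm : m.headI ≠ 0) : signChanges (consSign m) = signChanges m := by
  rcases m with _ | ⟨b, t⟩
  · exact absurd rfl hm
  · rw [consSign, List.headI_cons, signChanges_cons_cons, if_neg, add_zero]
    rw [Int.sign_mul_self_eq_natAbs]
    omega

theorem signChanges_consNegSign (hm : m.headI ≠ 0) :
    signChanges (consNegSign m) = signChanges m + 1 := by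
  rcases m with _ | ⟨b, t⟩
  · exact absurd rfl hm
  · rw [consNegSign, List.headI_cons, signChanges_cons_cons, if_pos]
    rw [neg_mul, Int.sign_mul_self_eq_natAbs]
    simpa using hm

theorem braidIndex_growHead (hm : m.headI ≠ 0) : braidIndex (growHead m) = braidIndex m + 1 := by
  have := signChanges_le_absSum m
  rw [braidIndex, braidIndex, absSum_growHead hm, signChanges_growHead]
  omega

theorem braidIndex_consSign (hm : m.headI ≠ 0) : braidIndex (consSign m) = braidIndex m + 1 := by
  have := signChanges_le_absSum m
  rw [braidIndex, braidIndex, absSum_consSign hm, signChanges_consSign hm]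
  omega

theorem braidIndex_consNegSign (hm : m.headI ≠ 0) :
    braidIndex (consNegSign m) = braidIndex m := by
  rw [braidIndex, braidIndex, absSum_consNegSign hm, signChanges_consNegSign hm]
  omega

theorem growHead_mem_crossingSeqs :
    growHead m ∈ crossingSeqs p (c + 2) ↔ m ∈ crossingSeqs p c := by
  refine mem_crossingSeqs_congr ?_ (by rw [length_growHead]) fun hm => ?_
  · rw [zero_mem_growHead]
    rcases m with _ | ⟨a, t⟩ <;> simp [growHead]
  · have := signChanges_le_absSum m
    rw [crossingNumber, crossingNumber, absSum_growHead hm, signChanges_growHead]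
    omega

theorem consSign_mem_crossingSeqs :
    consSign m ∈ crossingSeqs p (c + 2) ↔ m ∈ crossingSeqs (!p) c := by
  refine mem_crossingSeqs_congr ?_ ?_ fun hm => ?_
  · rcases m with _ | ⟨a, t⟩ <;> simp [consSign, eq_comm]
  · simp only [consSign, List.length_cons, Nat.bodd_succ, Bool.not_eq_eq_eq_not]
  · have := signChanges_le_absSum m
    rw [crossingNumber, crossingNumber, absSum_consSign hm, signChanges_consSign hm]
    omega

theorem consNegSign_mem_crossingSeqs :
    consNegSign m ∈ crossingSeqs p (c + 1) ↔ m ∈ crossingSeqs (!p) c := by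
  refine mem_crossingSeqs_congr ?_ ?_ fun hm => ?_
  · rcases m with _ | ⟨a, t⟩ <;> simp [consNegSign, eq_comm (a := (0 : ℤ))]
  · simp only [consNegSign, List.length_cons, Nat.bodd_succ, Bool.not_eq_eq_eq_not]
  · have := signChanges_le_absSum m
    rw [crossingNumber, crossingNumber, absSum_consNegSign hm, signChanges_consNegSign hm]
    omega

theorem exists_eq_growHead_or_consSign_or_consNegSign {a : ℤ} {t : List ℤ} (ha : a ≠ 0)
    (ht : 2 ≤ a.natAbs ∨ t.headI ≠ 0) :
    ∃ m, a :: t = growHead m ∨ a :: t = consSign m ∨ a :: t = consNegSign m := by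
  by_cases h2 : 2 ≤ a.natAbs
  · exact ⟨(a - a.sign) :: t, .inl (by rw [growHead, Int.sub_sign_add_sign h2])⟩
  · have hb := ht.resolve_left h2
    refine ⟨t, .inr ?_⟩
    simp only [consSign, consNegSign, List.cons.injEq, and_true]
    rcases lt_trichotomy t.headI 0 with h | h | h
    · rw [Int.sign_eq_neg_one_of_neg h]; omega
    · exact absurd h hb
    · rw [Int.sign_eq_one_of_pos h]; omega

theorem crossingSeqs_add_three (p : Bool) (c : ℕ) :
    crossingSeqs p (c + 3) = growHead '' crossingSeqs p (c + 1) ∪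
      consSign '' crossingSeqs (!p) (c + 1) ∪ consNegSign '' crossingSeqs (!p) (c + 2) := by
  ext l
  constructor
  · intro hl
    obtain ⟨hne, h0, -, hc⟩ := id hl
    obtain ⟨a, t, rfl⟩ := List.exists_cons_of_ne_nil hne
    have ht : 2 ≤ a.natAbs ∨ t.headI ≠ 0 := by
      rcases t with _ | ⟨b, t⟩
      · rw [crossingNumber_singleton] at hc
        omega
      · exact .inr fun hb => h0 (by simp [← hb])
    obtain ⟨m, hm | hm | hm⟩ := exists_eq_growHead_or_consSign_or_consNegSign
      (fun ha => h0 (by simp [ha])) ht <;> rw [hm] at hl ⊢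
    · exact .inl (.inl ⟨m, growHead_mem_crossingSeqs.1 hl, rfl⟩)
    · exact .inl (.inr ⟨m, consSign_mem_crossingSeqs.1 hl, rfl⟩)
    · exact .inr ⟨m, consNegSign_mem_crossingSeqs.1 hl, rfl⟩
  · rintro ((⟨m, hm, rfl⟩ | ⟨m, hm, rfl⟩) | ⟨m, hm, rfl⟩)
    · exact growHead_mem_crossingSeqs.2 hm
    · exact consSign_mem_crossingSeqs.2 hm
    · exact consNegSign_mem_crossingSeqs.2 hm

theorem disjoint_image_growHead {s t : Set (List ℤ)} {f : List ℤ → List ℤ}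
    (hs : ∀ m ∈ s, m.headI ≠ 0) (hf : ∀ m ∈ t, (f m).headI.natAbs = 1) :
    Disjoint (growHead '' s) (f '' t) := by
  rw [Set.disjoint_left]
  rintro _ ⟨m, hm, rfl⟩ ⟨m', hm', h⟩
  have := hf m' hm'
  rcases m with _ | ⟨a, t⟩
  · exact hs _ hm rfl
  · have ha : a ≠ 0 := hs _ hm
    rw [h, growHead, List.headI_cons, Int.natAbs_add_sign ha] at this
    exact ha (Int.natAbs_eq_zero.1 (by omega))

theorem disjoint_image_consSign_consNegSign {s t : Set (List ℤ)}
    (hs : ∀ m ∈ s, m.headI ≠ 0) :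
    Disjoint (consSign '' s) (consNegSign '' t) := by
  rw [Set.disjoint_left]
  rintro _ ⟨m, hm, rfl⟩ ⟨m', -, h⟩
  obtain ⟨h1, rfl⟩ := List.cons.inj h
  exact hs _ hm (Int.sign_eq_zero_iff_zero.1 (by omega))

theorem finsum_crossingSeqs_add_three {M : Type*} [AddCommMonoid M] (f : List ℤ → M) (p : Bool)
    (c : ℕ) :
    ∑ᶠ l ∈ crossingSeqs p (c + 3), f l =
      ∑ᶠ m ∈ crossingSeqs p (c + 1), f (growHead m) +
        ∑ᶠ m ∈ crossingSeqs (!p) (c + 1), f (consSign m) +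
          ∑ᶠ m ∈ crossingSeqs (!p) (c + 2), f (consNegSign m) := by
  have hz {q d} : ∀ m ∈ crossingSeqs q d, m.headI ≠ 0 :=
    fun _ => headI_ne_zero_of_mem_crossingSeqs
  have hfin {g : List ℤ → List ℤ} {q d} : (g '' crossingSeqs q d).Finite :=
    (crossingSeqs_finite q d).image g
  rw [crossingSeqs_add_three, finsum_mem_union _ (hfin.union hfin) hfin,
    finsum_mem_union _ hfin hfin, finsum_mem_image growHead_injective.injOn,
    finsum_mem_image consSign_injective.injOn, finsum_mem_image consNegSign_injective.injOn]
  · exact disjoint_image_growHead hz fun m hm => Int.natAbs_sign_of_ne_zero (hz m hm)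
  · exact Set.disjoint_union_left.2
      ⟨disjoint_image_growHead hz fun m hm => by
          rw [consNegSign, List.headI_cons, Int.natAbs_neg, Int.natAbs_sign_of_ne_zero (hz m hm)],
        disjoint_image_consSign_consNegSign hz⟩

end Peeling

theorem ncard_crossingSeqs_add_three (p : Bool) (c : ℕ) :
    (crossingSeqs p (c + 3)).ncard = (crossingSeqs p (c + 1)).ncard +
      (crossingSeqs (!p) (c + 1)).ncard + (crossingSeqs (!p) (c + 2)).ncard := by
  have := finsum_crossingSeqs_add_three (fun _ => (1 : ℕ)) p c
  rwa [finsum_one, finsum_one, finsum_one, finsum_one] at this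

theorem crossingSeqs_one (p : Bool) : crossingSeqs p 1 = ∅ :=
  Set.eq_empty_of_forall_notMem fun _ hl => by
    have := (eq_singleton_of_mem_crossingSeqs_of_le_two hl (by norm_num)).1
    omega

theorem crossingSeqs_false_two : crossingSeqs false 2 = ∅ :=
  Set.eq_empty_of_forall_notMem fun _ hl => by
    simpa using (eq_singleton_of_mem_crossingSeqs_of_le_two hl le_rfl).2.1

theorem crossingSeqs_true_two : crossingSeqs true 2 = {[1], [-1]} := by
  ext l
  refine ⟨fun hl => (eq_singleton_of_mem_crossingSeqs_of_le_two hl le_rfl).2.2, ?_⟩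
  rintro (rfl | rfl) <;> simp [crossingSeqs, crossingNumber_singleton]

theorem sum_ncard_crossingSeqs_eq_two_pow (c : ℕ) :
    (crossingSeqs false (c + 2)).ncard + (crossingSeqs true (c + 2)).ncard +
      (crossingSeqs false (c + 1)).ncard + (crossingSeqs true (c + 1)).ncard = 2 ^ (c + 1) := by
  induction c with
  | zero =>
    rw [crossingSeqs_false_two, crossingSeqs_true_two, crossingSeqs_one, crossingSeqs_one,
      Set.ncard_pair (by decide)]
    simp
  | succ c ih =>
    have h₀ := ncard_crossingSeqs_add_three false c
    have h₁ := ncard_crossingSeqs_add_three true c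
    simp only [Bool.not_false, Bool.not_true] at h₀ h₁
    simp only [Nat.add_assoc, Nat.reduceAdd, pow_succ] at ih ⊢
    omega

noncomputable def braidSum (p : Bool) (c : ℕ) : ℕ := ∑ᶠ l ∈ crossingSeqs p c, braidIndex l

theorem braidSum_add_three (p : Bool) (c : ℕ) :
    braidSum p (c + 3) = braidSum p (c + 1) + (crossingSeqs p (c + 1)).ncard +
      braidSum (!p) (c + 1) + (crossingSeqs (!p) (c + 1)).ncard + braidSum (!p) (c + 2) := by
  have hz {q d} {m} (hm : m ∈ crossingSeqs q d) := headI_ne_zero_of_mem_crossingSeqs hm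
  rw [braidSum, finsum_crossingSeqs_add_three,
    finsum_mem_congr rfl fun m hm => braidIndex_growHead (hz hm),
    finsum_mem_congr rfl fun m hm => braidIndex_consSign (hz hm),
    finsum_mem_congr rfl fun m hm => braidIndex_consNegSign (hz hm),
    finsum_mem_add_distrib (crossingSeqs_finite _ _),
    finsum_mem_add_distrib (crossingSeqs_finite _ _), finsum_one, finsum_one,
    braidSum, braidSum, braidSum]
  ring

theorem mem_Eset_iff {c b : ℕ} {l : List ℤ} :
    l ∈ Eset c b ↔ l ∈ crossingSeqs false c ∧ braidIndex l = b := by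
  have hL := signChanges_le_absSum l
  have hev : Even l.length ↔ l.length.bodd = false := by
    rw [Nat.even_iff, Nat.mod_two_of_bodd]
    cases l.length.bodd <;> decide
  simp only [Eset, IsECF, crossingSeqs, crossingNumber, braidIndex, Set.mem_ofPred_eq, hev,
    ne_eq, List.forall_mem_ne']
  constructor
  · rintro ⟨⟨hne, hp, h0⟩, hc, hb⟩
    exact ⟨⟨hne, h0, hp, by omega⟩, by omega⟩
  · rintro ⟨⟨hne, h0, hp, hc⟩, hb⟩
    exact ⟨⟨hne, hp, h0⟩, by omega, by omega⟩

theorem tbi_eq_braidSum (c : ℕ) : tbi c = braidSum false c := by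
  have hs := crossingSeqs_finite false c
  rw [braidSum, finsum_mem_eq_finite_toFinset_sum _ hs, tbi,
    ← Finset.sum_fiberwise_of_maps_to fun l hl => braidIndex_mem_Icc (hs.mem_toFinset.1 hl)]
  refine Finset.sum_congr rfl fun b _ => ?_
  have hE : Eset c b = ↑(hs.toFinset.filter fun l => braidIndex l = b) := by
    ext l
    simp [mem_Eset_iff]
  rw [Finset.sum_congr rfl fun l hl => (Finset.mem_filter.1 hl).2, Finset.sum_const, smul_eq_mul,
    mul_comm, e, hE, Set.ncard_coe_finset]

theorem tbi_recursion (c : ℕ) (hc : 6 ≤ c) :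
    tbi c = 3 * tbi (c - 2) + 2 * tbi (c - 3) + 2 ^ (c - 3) := by
  obtain ⟨d, rfl⟩ : ∃ d, c = d + 6 := ⟨c - 6, by omega⟩
  simp only [show d + 6 - 2 = d + 4 by omega, show d + 6 - 3 = d + 3 by omega, tbi_eq_braidSum]
  have h₆ := braidSum_add_three false (d + 3)
  have h₅ := braidSum_add_three true (d + 2)
  -- `h₄` minus `h₄'`: the even- and the odd-length sequences of crossing numbers `d + 3` and
  -- `d + 4` have the same total braid index.
  have h₄ := braidSum_add_three false (d + 1)
  have h₄' := braidSum_add_three true (d + 1)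
  have hN := sum_ncard_crossingSeqs_eq_two_pow (d + 2)
  simp only [Bool.not_false, Bool.not_true, Nat.add_assoc, Nat.reduceAdd] at h₆ h₅ h₄ h₄' hN
  omega
end

section
/- The average braid index E(Braid_c) = (tbi(c) + tbi_p(c))/(e(c) + e_p(c)) of 2-bridge knots with crossing number c satisfies E(Braid_c) → c/3 + 11/9 as c → ∞, in the sense that E(Braid_c) − (c/3 + 11/9) tends to 0. -/
/-- `e(c)`, the number of even continued fraction representations with
crossing number `c`, as a real number. -/
noncomputable def eR (c : ℕ) : ℝ := 2 / 3 * (2 ^ (c - 2) - (-1 : ℝ) ^ (c - 2))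

/-- `e_p(c)`, the number of (anti-)palindromic representations with
crossing number `c`, as a real number. -/
noncomputable def epR (c : ℕ) : ℝ :=
  2 / 3 * (2 ^ ((c - 1) / 2) - (-1 : ℝ) ^ ((c - 1) / 2))

/-- The total braid index `tbi(c)`. -/
noncomputable def tbiR (c : ℕ) : ℝ :=
  ((6 * (c : ℝ) + 22) * 2 ^ (c - 2) + (6 * (c : ℝ) - 46) * (-1) ^ c) / 27

/-- The total palindromic braid index `tbi_p(c)`. -/
noncomputable def tbipR (c : ℕ) : ℝ :=
  if Even c then
    ((3 * (c : ℝ) + 13) * 2 ^ (c / 2) + (12 * (c : ℝ) + 14) * (-1) ^ (c / 2)) / 27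
  else
    ((6 * (c : ℝ) + 14) * 2 ^ ((c - 1) / 2) - (12 * (c : ℝ) + 8) * (-1) ^ ((c - 1) / 2)) / 27

/-- The average braid index of 2-bridge knots with crossing number `c`. -/
noncomputable def avgBraid (c : ℕ) : ℝ := (tbiR c + tbipR c) / (eR c + epR c)

/-!
With `a = c/3 + 11/9`, the `2^c`-terms of `tbi(c)` and `a · e(c)` cancel exactly, leaving
`(12c - 24)(-1)^c / 27`. The palindromic terms `tbi_p(c)` and `a · e_p(c)` are only of size
`O(c · 2^(c/2))`, while the denominator `e(c) + e_p(c)` is at least of order `2^c`. Hence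
`|E(Braid_c) - a| = O(c / 2^(c/2)) → 0`.
-/

open Filter Topology

/-- `e(c) = 2 J_{c-2}` and `e_p(c) = 2 J_{⌊(c-1)/2⌋}`, where `J_k = (2^k - (-1)^k)/3` is the
`k`-th Jacobsthal number. -/
noncomputable def twiceJacobsthal (k : ℕ) : ℝ := 2 / 3 * (2 ^ k - (-1 : ℝ) ^ k)

lemma eR_eq_twiceJacobsthal (c : ℕ) : eR c = twiceJacobsthal (c - 2) := rfl

lemma epR_eq_twiceJacobsthal (c : ℕ) : epR c = twiceJacobsthal ((c - 1) / 2) := rfl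

lemma twiceJacobsthal_nonneg (k : ℕ) : 0 ≤ twiceJacobsthal k := by
  have : (1 : ℝ) ≤ 2 ^ k := one_le_pow₀ one_le_two
  rcases neg_one_pow_eq_or ℝ k with h | h <;> simp only [twiceJacobsthal, h] <;> linarith

lemma twiceJacobsthal_le (k : ℕ) : twiceJacobsthal k ≤ 2 ^ k := by
  rcases Nat.even_or_odd k with hk | hk
  · have : (0 : ℝ) ≤ 2 ^ k := by positivity
    simp only [twiceJacobsthal, hk.neg_one_pow]
    linarith
  · have : (2 : ℝ) ≤ 2 ^ k := le_self_pow₀ one_le_two hk.pos.ne'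
    simp only [twiceJacobsthal, hk.neg_one_pow]
    linarith

lemma pow_le_three_mul_twiceJacobsthal {k : ℕ} (hk : 1 ≤ k) :
    (2 : ℝ) ^ k ≤ 3 * twiceJacobsthal k := by
  have : (2 : ℝ) ≤ 2 ^ k := le_self_pow₀ one_le_two (by omega)
  rcases neg_one_pow_eq_or ℝ k with h | h <;> simp only [twiceJacobsthal, h] <;> linarith

lemma sq_two_pow_half_le_twelve_mul_eR_add_epR {c : ℕ} (hc : 3 ≤ c) :
    ((2 : ℝ) ^ (c / 2)) ^ 2 ≤ 12 * (eR c + epR c) := by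
  have hpow : ((2 : ℝ) ^ (c / 2)) ^ 2 ≤ 4 * 2 ^ (c - 2) := by
    rw [← pow_mul, show (4 : ℝ) = 2 ^ 2 by norm_num, ← pow_add]
    exact pow_le_pow_right₀ one_le_two (by omega)
  have he := pow_le_three_mul_twiceJacobsthal (k := c - 2) (by omega)
  have hep := twiceJacobsthal_nonneg ((c - 1) / 2)
  rw [eR_eq_twiceJacobsthal, epR_eq_twiceJacobsthal]
  linarith

lemma tbiR_sub_mul_eR {c : ℕ} (hc : 2 ≤ c) :
    tbiR c - ((c : ℝ) / 3 + 11 / 9) * eR c = (12 * c - 24) * (-1) ^ c / 27 := by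
  obtain ⟨k, rfl⟩ := Nat.exists_eq_add_of_le' hc
  simp only [tbiR, eR, Nat.add_sub_cancel, pow_add]
  ring

lemma abs_tbipR_le (c : ℕ) : |tbipR c| ≤ (c + 2) * 2 ^ (c / 2) := by
  have hc : (0 : ℝ) ≤ c := c.cast_nonneg
  have hs : (1 : ℝ) ≤ 2 ^ (c / 2) := one_le_pow₀ one_le_two
  rcases Nat.even_or_odd c with hev | hodd
  · rw [tbipR, if_pos hev]
    rcases neg_one_pow_eq_or ℝ (c / 2) with h | h <;> rw [h, abs_le] <;>
      constructor <;> nlinarith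
  · have hsub : (c - 1) / 2 = c / 2 := by obtain ⟨m, rfl⟩ := hodd; omega
    rw [tbipR, if_neg (Nat.not_even_iff_odd.mpr hodd), hsub]
    rcases neg_one_pow_eq_or ℝ (c / 2) with h | h <;> rw [h, abs_le] <;>
      constructor <;> nlinarith

lemma abs_tbiR_add_tbipR_sub_mul_le {c : ℕ} (hc : 2 ≤ c) :
    |tbiR c + tbipR c - ((c : ℝ) / 3 + 11 / 9) * (eR c + epR c)| ≤
      3 * ((c + 2) * 2 ^ (c / 2)) := by
  have hc2 : (2 : ℝ) ≤ c := by exact_mod_cast hc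
  have hs : (1 : ℝ) ≤ 2 ^ (c / 2) := one_le_pow₀ one_le_two
  have htbi : |tbiR c - ((c : ℝ) / 3 + 11 / 9) * eR c| ≤ (c + 2) * 2 ^ (c / 2) := by
    rw [tbiR_sub_mul_eR hc, abs_div, abs_mul, abs_neg_one_pow, abs_of_nonneg (by linarith),
      abs_of_pos (by norm_num : (0 : ℝ) < 27)]
    nlinarith
  have hep : |((c : ℝ) / 3 + 11 / 9) * epR c| ≤ (c + 2) * 2 ^ (c / 2) := by
    have h0 := twiceJacobsthal_nonneg ((c - 1) / 2)
    have h1 : twiceJacobsthal ((c - 1) / 2) ≤ 2 ^ (c / 2) :=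
      (twiceJacobsthal_le _).trans (pow_le_pow_right₀ one_le_two (by omega))
    rw [epR_eq_twiceJacobsthal, abs_of_nonneg (by positivity)]
    exact mul_le_mul (by linarith) h1 h0 (by positivity)
  calc |tbiR c + tbipR c - ((c : ℝ) / 3 + 11 / 9) * (eR c + epR c)|
      = |(tbiR c - (c / 3 + 11 / 9) * eR c) + tbipR c + -((c / 3 + 11 / 9) * epR c)| := by
        ring_nf
    _ ≤ |tbiR c - (c / 3 + 11 / 9) * eR c| + |tbipR c| + |(c / 3 + 11 / 9) * epR c| :=
        (abs_add_three _ _ _).trans_eq (by rw [abs_neg])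
    _ ≤ 3 * ((c + 2) * 2 ^ (c / 2)) := by linarith [abs_tbipR_le c]

lemma abs_avgBraid_sub_le {c : ℕ} (hc : 3 ≤ c) :
    |avgBraid c - ((c : ℝ) / 3 + 11 / 9)| ≤ 36 * (((c : ℝ) + 2) / 2 ^ (c / 2)) := by
  have hs : (0 : ℝ) < 2 ^ (c / 2) := by positivity
  have hD := sq_two_pow_half_le_twelve_mul_eR_add_epR hc
  have hDpos : 0 < eR c + epR c := by nlinarith
  have hN := abs_tbiR_add_tbipR_sub_mul_le (c := c) (by omega)
  rw [avgBraid, div_sub' hDpos.ne', abs_div, abs_of_pos hDpos, div_le_iff₀ hDpos]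
  calc |tbiR c + tbipR c - (eR c + epR c) * ((c : ℝ) / 3 + 11 / 9)|
      ≤ 3 * ((c + 2) * 2 ^ (c / 2)) := by rwa [mul_comm (eR c + epR c)]
    _ = 36 * ((c + 2) / 2 ^ (c / 2)) * ((2 ^ (c / 2)) ^ 2 / 12) := by field_simp; ring
    _ ≤ 36 * ((c + 2) / 2 ^ (c / 2)) * (eR c + epR c) := by gcongr; linarith

lemma tendsto_add_two_div_two_pow_half :
    Tendsto (fun c : ℕ => ((c : ℝ) + 2) / 2 ^ (c / 2)) atTop (𝓝 0) := by
  have hlim :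
      Tendsto (fun c : ℕ => (((c / 2 + 1 : ℕ) : ℝ) ^ 1 / 2 ^ (c / 2 + 1))) atTop (𝓝 0) :=
    (tendsto_pow_const_div_const_pow_of_one_lt 1 one_lt_two).comp
      ((tendsto_add_atTop_nat 1).comp (Nat.tendsto_div_const_atTop two_ne_zero))
  refine squeeze_zero (fun c => by positivity) (fun c => ?_) (by simpa using hlim.const_mul 8)
  have hc : (c : ℝ) ≤ 2 * (c / 2 : ℕ) + 1 := by
    exact_mod_cast (by omega : c ≤ 2 * (c / 2) + 1)
  rw [div_le_iff₀ (by positivity)]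
  field_simp
  rw [pow_succ]
  nlinarith [pow_pos (two_pos : (0 : ℝ) < 2) (c / 2)]

theorem avgBraid_asymptotic :
    Filter.Tendsto (fun c : ℕ => avgBraid c - ((c : ℝ) / 3 + 11 / 9))
      Filter.atTop (nhds 0) := by
  refine squeeze_zero_norm' ?_ (by simpa using tendsto_add_two_div_two_pow_half.const_mul 36)
  filter_upwards [eventually_ge_atTop 3] with c hc
  exact abs_avgBraid_sub_le hc
end
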